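/- Let (V₀, g) be a finite-dimensional positive definite real inner product space and let A₁, A₂ be algebraic curvature tensors on V₀ which are Einstein with Einstein constants a₁ and a₂ respectively. Then the Ricci operator ρ of the model M(V₀,g,A₁,A₂) = (V₀ × V₀, ⟨·,·⟩, A) is given by ρ(x⁺, x⁻) = (2a₁·x⁺ − 2a₂·x⁻, 2a₂·x⁺ + 2a₁·x⁻); that is, under the identification of V₀ × V₀ with V₀ ⊗ ℂ, ρ is complex scalar multiplication by 2a₁ + 2a₂·i. -/

import Mathlib

open TensorProduct

/-- `f : W⁴ → ℝ` is multilinear over `ℝ` in each of its four slots. -/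
def IsML {W : Type*} [AddCommGroup W] [Module ℝ W] (f : W → W → W → W → ℝ) : Prop :=
  (∀ x x' y z w, f (x + x') y z w = f x y z w + f x' y z w) ∧
  (∀ (c : ℝ) x y z w, f (c • x) y z w = c * f x y z w) ∧
  (∀ x y y' z w, f x (y + y') z w = f x y z w + f x y' z w) ∧
  (∀ (c : ℝ) x y z w, f x (c • y) z w = c * f x y z w) ∧
  (∀ x y z z' w, f x y (z + z') w = f x y z w + f x y z' w) ∧
  (∀ (c : ℝ) x y z w, f x y (c • z) w = c * f x y z w) ∧
  (∀ x y z w w', f x y z (w + w') = f x y z w + f x y z w') ∧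
  (∀ (c : ℝ) x y z w, f x y z (c • w) = c * f x y z w)

/-- The symmetries of the Riemann curvature tensor. -/
def IsCurvSym {W : Type*} [AddCommGroup W] [Module ℝ W] (f : W → W → W → W → ℝ) : Prop :=
  (∀ x y z w, f x y z w = - f y x z w) ∧
  (∀ x y z w, f x y z w = f z w x y) ∧
  (∀ x y z w, f x y z w + f y z x w + f z x y w = 0)

/-- An algebraic curvature tensor: a multilinear map with the curvature symmetries. -/
def IsACT {W : Type*} [AddCommGroup W] [Module ℝ W] (f : W → W → W → W → ℝ) : Prop :=
  IsML f ∧ IsCurvSym f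

/-- The defining value of `⟨ρ x, y⟩`: the trace of `z ↦ ½𝓡(z,x)y + ½𝓡(z,y)x`,
where `R` is the (curried) curvature operator. -/
noncomputable def ricciForm {V : Type*} [AddCommGroup V] [Module ℝ V]
    (R : V →ₗ[ℝ] V →ₗ[ℝ] V →ₗ[ℝ] V) (x y : V) : ℝ :=
  LinearMap.trace ℝ V
    (((1 : ℝ) / 2) • ((R.flip x).flip y) + ((1 : ℝ) / 2) • ((R.flip y).flip x))

/-- The Jacobi--Ricci commuting identity of Lemma 1 (3). -/
def JRComm {V : Type*} [AddCommGroup V] [Module ℝ V]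
    (A : V → V → V → V → ℝ) (ρ : V →ₗ[ℝ] V) : Prop :=
  ∀ v₁ v₂ v₃ v₄ : V,
    A (ρ v₁) v₂ v₃ v₄ = A v₁ (ρ v₂) v₃ v₄ ∧
    A v₁ (ρ v₂) v₃ v₄ = A v₁ v₂ (ρ v₃) v₄ ∧
    A v₁ v₂ (ρ v₃) v₄ = A v₁ v₂ v₃ (ρ v₄)

/-- The ℂ-valued tensor `A₁ + i·A₂`. -/
noncomputable def acx {W : Type*} [AddCommGroup W] [Module ℝ W]
    (A₁ A₂ : W → W → W → W → ℝ) (x y z w : W) : ℂ :=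
  (A₁ x y z w : ℂ) + Complex.I * (A₂ x y z w : ℂ)

/-- The complex multilinear extension `(A₁ + i·A₂)^ℂ` of `A₁ + i·A₂` to the
complexification of `W`, where `W × W` is identified with `W ⊗ ℂ` via
`(x⁺, x⁻) ↔ x⁺ + i·x⁻`. -/
noncomputable def acExt {W : Type*} [AddCommGroup W] [Module ℝ W]
    (A₁ A₂ : W → W → W → W → ℝ) (p q r s : W × W) : ℂ :=
  acx A₁ A₂ p.1 q.1 r.1 s.1
  + Complex.I * (acx A₁ A₂ p.2 q.1 r.1 s.1 + acx A₁ A₂ p.1 q.2 r.1 s.1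
      + acx A₁ A₂ p.1 q.1 r.2 s.1 + acx A₁ A₂ p.1 q.1 r.1 s.2)
  - (acx A₁ A₂ p.2 q.2 r.1 s.1 + acx A₁ A₂ p.2 q.1 r.2 s.1 + acx A₁ A₂ p.2 q.1 r.1 s.2
      + acx A₁ A₂ p.1 q.2 r.2 s.1 + acx A₁ A₂ p.1 q.2 r.1 s.2 + acx A₁ A₂ p.1 q.1 r.2 s.2)
  - Complex.I * (acx A₁ A₂ p.2 q.2 r.2 s.1 + acx A₁ A₂ p.2 q.2 r.1 s.2
      + acx A₁ A₂ p.2 q.1 r.2 s.2 + acx A₁ A₂ p.1 q.2 r.2 s.2)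
  + acx A₁ A₂ p.2 q.2 r.2 s.2

/-- The curvature tensor `A := Re((A₁ + i·A₂)^ℂ)` of the model `M(V₀,g,A₁,A₂)`. -/
noncomputable def modelA {W : Type*} [AddCommGroup W] [Module ℝ W]
    (A₁ A₂ : W → W → W → W → ℝ) (p q r s : W × W) : ℝ :=
  (acExt A₁ A₂ p q r s).re

/-- The inner product `⟨(x⁺,x⁻),(y⁺,y⁻)⟩ = g(x⁺,y⁺) − g(x⁻,y⁻)` of the model
`M(V₀,g,A₁,A₂)`. -/
def modelB {W : Type*} [AddCommGroup W] [Module ℝ W]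
    (g : LinearMap.BilinForm ℝ W) (p q : W × W) : ℝ :=
  g p.1 q.1 - g p.2 q.2

/-- `f` is Einstein with Einstein constant `a` on the positive definite inner product
space `(W, g)`: for every `g`-orthonormal basis `{e_k}` one has
`Σ_k f(x, e_k, e_k, y) = a·g(x,y)`. -/
def IsEinsteinWith {W : Type*} [AddCommGroup W] [Module ℝ W]
    (g : LinearMap.BilinForm ℝ W) (f : W → W → W → W → ℝ) (a : ℝ) : Prop :=
  ∀ (n : ℕ) (b : Module.Basis (Fin n) ℝ W),
    (∀ i j, g (b i) (b j) = if i = j then 1 else 0) →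
    ∀ x y, (∑ k, f x (b k) (b k) y) = a * g x y

/-! The trace defining `ρ` is computed in the `⟨·,·⟩`-pseudo-orthonormal basis
`{(e_k, 0)} ∪ {(0, e_k)}` built from a `g`-orthonormal basis `{e_k}`. On these vectors the
complex extension collapses: `A((e,0), p, q, (e,0)) - A((0,e), p, q, (0,e))` is twice the real
part of `(A₁ + iA₂)(e, p⁺ + ip⁻, q⁺ + iq⁻, e)`, so the Einstein conditions turn the trace into
`Re((2a₁ + 2ia₂) · g^ℂ(p, q))`, and `⟨·,·⟩` is nondegenerate. -/

section Model

variable {W : Type*} [AddCommGroup W] [Module ℝ W]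

theorem IsML.apply_zero_left {f : W → W → W → W → ℝ} (h : IsML f) (y z w : W) :
    f 0 y z w = 0 := by
  simpa using h.2.1 0 0 y z w

theorem IsML.apply_zero_right {f : W → W → W → W → ℝ} (h : IsML f) (x y z : W) :
    f x y z 0 = 0 := by
  simpa using h.2.2.2.2.2.2.2 0 x y z 0

theorem IsCurvSym.apply_swap_outer {f : W → W → W → W → ℝ} (h : IsCurvSym f) (e x y : W) :
    f e x y e = f x e e y := by
  obtain ⟨anti, pair, -⟩ := h
  rw [anti e x y e, pair x e y e, anti y e x e, pair e y x e, neg_neg]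

theorem modelA_sub_modelA_of_isML {A₁ A₂ : W → W → W → W → ℝ} (h₁ : IsML A₁) (h₂ : IsML A₂)
    (e : W) (p q : W × W) :
    modelA A₁ A₂ (e, 0) p q (e, 0) - modelA A₁ A₂ (0, e) p q (0, e)
      = 2 * (A₁ e p.1 q.1 e - A₂ e p.2 q.1 e - A₂ e p.1 q.2 e - A₁ e p.2 q.2 e) := by
  simp only [modelA, acExt, acx, h₁.apply_zero_left, h₂.apply_zero_left, h₁.apply_zero_right,
    h₂.apply_zero_right, Complex.ofReal_zero, mul_zero, add_zero, zero_add, sub_zero,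
    Complex.sub_re, Complex.add_re, Complex.ofReal_re, Complex.mul_re, Complex.I_re, zero_mul,
    Complex.I_im, Complex.ofReal_im, sub_self, Complex.add_im, Complex.mul_im, one_mul, zero_sub,
    neg_add_rev, Complex.neg_re, neg_zero]
  ring

theorem eq_of_forall_modelB_eq {g : LinearMap.BilinForm ℝ W} (hgpos : ∀ x : W, x ≠ 0 → 0 < g x x)
    {u v : W × W} (h : ∀ s, modelB g u s = modelB g v s) : u = v := by
  have hfst : u.1 - v.1 = 0 := by
    by_contra hne
    have := h (u.1 - v.1, 0)
    simp only [modelB, map_zero, sub_zero] at this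
    exact (hgpos _ hne).ne' (by rw [LinearMap.map_sub₂, this, sub_self])
  have hsnd : u.2 - v.2 = 0 := by
    by_contra hne
    have := h (0, u.2 - v.2)
    simp only [modelB, map_zero, zero_sub, neg_inj] at this
    exact (hgpos _ hne).ne' (by rw [LinearMap.map_sub₂, this, sub_self])
  exact Prod.ext (sub_eq_zero.mp hfst) (sub_eq_zero.mp hsnd)

end Model

section OrthonormalBasis

variable {W : Type*} [AddCommGroup W] [Module ℝ W] {g : LinearMap.BilinForm ℝ W}

theorem exists_basis_orthonormal_of_symm_of_pos [FiniteDimensional ℝ W]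
    (hgsymm : ∀ x y, g x y = g y x) (hgpos : ∀ x : W, x ≠ 0 → 0 < g x x) :
    ∃ (n : ℕ) (b : Module.Basis (Fin n) ℝ W), ∀ i j, g (b i) (b j) = if i = j then 1 else 0 := by
  let core : InnerProductSpace.Core ℝ W :=
    { inner := fun x y => g x y
      conj_inner_symm := fun x y => by simpa using hgsymm y x
      re_inner_nonneg := fun x => by
        rcases eq_or_ne x 0 with rfl | hx
        · simp
        · simpa using (hgpos x hx).le
      add_left := fun x y z => by simp
      smul_left := fun x y r => by simp
      definite := fun x hx => by
        by_contra hne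
        exact (hgpos x hne).ne' hx }
  let _ : NormedAddCommGroup W := core.toNormedAddCommGroup
  let _ : InnerProductSpace ℝ W := InnerProductSpace.ofCore core.toCore
  refine ⟨Module.finrank ℝ W, (stdOrthonormalBasis ℝ W).toBasis, fun i j => ?_⟩
  have h := orthonormal_iff_ite.mp (stdOrthonormalBasis ℝ W).orthonormal i j
  rw [OrthonormalBasis.coe_toBasis]
  exact h

theorem sum_apply_basis_outer_eq_of_isEinsteinWith {n : ℕ} {b : Module.Basis (Fin n) ℝ W}
    (hb : ∀ i j, g (b i) (b j) = if i = j then 1 else 0) {A : W → W → W → W → ℝ} {a : ℝ}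
    (hA : IsCurvSym A) (hE : IsEinsteinWith g A a) (u v : W) :
    ∑ k, A (b k) u v (b k) = a * g u v := by
  simp only [hA.apply_swap_outer]
  exact hE n b hb u v

variable {ι : Type*} [DecidableEq ι] {b : Module.Basis ι ℝ W}

theorem Module.Basis.repr_apply_eq_of_orthonormal
    (hb : ∀ i j, g (b i) (b j) = if i = j then 1 else 0) (v : W) (k : ι) :
    b.repr v k = g v (b k) := by
  have hcoord : g.flip (b k) = b.coord k :=
    b.ext fun i => by simp [hb, Finsupp.single_apply, eq_comm]
  rw [← b.coord_apply, ← hcoord]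
  rfl

theorem trace_prod_eq_sum_modelB [Fintype ι] (hb : ∀ i j, g (b i) (b j) = if i = j then 1 else 0)
    (T : (W × W) →ₗ[ℝ] (W × W)) :
    LinearMap.trace ℝ (W × W) T
      = ∑ k, (modelB g (T (b k, 0)) (b k, 0) - modelB g (T (0, b k)) (0, b k)) := by
  have hinl : ∀ k, (b.prod b) (Sum.inl k) = (b k, 0) := fun k =>
    Prod.ext (b.prod_apply_inl_fst b k) (b.prod_apply_inl_snd b k)
  have hinr : ∀ k, (b.prod b) (Sum.inr k) = (0, b k) := fun k =>
    Prod.ext (b.prod_apply_inr_fst b k) (b.prod_apply_inr_snd b k)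
  rw [LinearMap.trace_eq_matrix_trace ℝ (b.prod b) T]
  simp only [Matrix.trace, Matrix.diag, LinearMap.toMatrix_apply, Fintype.sum_sum_type,
    Module.Basis.prod_repr_inl, Module.Basis.prod_repr_inr, hinl, hinr,
    b.repr_apply_eq_of_orthonormal hb, modelB, map_zero, sub_zero, zero_sub,
    sub_neg_eq_add, Finset.sum_add_distrib]

theorem ricciForm_eq_sum_modelA [Fintype ι] (hb : ∀ i j, g (b i) (b j) = if i = j then 1 else 0)
    {A₁ A₂ : W → W → W → W → ℝ} {R : (W × W) →ₗ[ℝ] (W × W) →ₗ[ℝ] (W × W) →ₗ[ℝ] (W × W)}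
    (hR : ∀ p q r s, modelB g (R p q r) s = modelA A₁ A₂ p q r s) (p q : W × W) :
    ricciForm R p q = (1 / 2) * ∑ k,
      ((modelA A₁ A₂ (b k, 0) p q (b k, 0) - modelA A₁ A₂ (0, b k) p q (0, b k))
        + (modelA A₁ A₂ (b k, 0) q p (b k, 0) - modelA A₁ A₂ (0, b k) q p (0, b k))) := by
  have hB : ∀ z : W × W, modelB g ((1 / 2 : ℝ) • R z p q + (1 / 2 : ℝ) • R z q p) z
      = (1 / 2) * (modelA A₁ A₂ z p q z + modelA A₁ A₂ z q p z) := by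
    intro z
    simp only [modelB, Prod.fst_add, Prod.snd_add, Prod.smul_fst, Prod.smul_snd, map_add,
      map_smul, LinearMap.add_apply, LinearMap.smul_apply, smul_eq_mul, ← hR]
    ring
  rw [ricciForm, trace_prod_eq_sum_modelB hb, Finset.mul_sum]
  refine Finset.sum_congr rfl fun k _ => ?_
  simp only [LinearMap.add_apply, LinearMap.smul_apply, LinearMap.flip_apply, hB]
  ring

end OrthonormalBasis

theorem statement6
    {V₀ : Type*} [AddCommGroup V₀] [Module ℝ V₀] [FiniteDimensional ℝ V₀]
    (g : LinearMap.BilinForm ℝ V₀)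
    (hgsymm : ∀ x y, g x y = g y x)
    (hgpos : ∀ x : V₀, x ≠ 0 → 0 < g x x)
    (A₁ A₂ : V₀ → V₀ → V₀ → V₀ → ℝ) (hA₁ : IsACT A₁) (hA₂ : IsACT A₂)
    (a₁ a₂ : ℝ)
    (hE₁ : IsEinsteinWith g A₁ a₁) (hE₂ : IsEinsteinWith g A₂ a₂)
    (R : (V₀ × V₀) →ₗ[ℝ] (V₀ × V₀) →ₗ[ℝ] (V₀ × V₀) →ₗ[ℝ] (V₀ × V₀))
    (hR : ∀ p q r s, modelB g (R p q r) s = modelA A₁ A₂ p q r s)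
    (ρ : (V₀ × V₀) →ₗ[ℝ] (V₀ × V₀))
    (hρ : ∀ p q, modelB g (ρ p) q = ricciForm R p q) :
    ∀ x y : V₀, ρ (x, y) = ((2 * a₁) • x - (2 * a₂) • y, (2 * a₂) • x + (2 * a₁) • y) := by
  intro x y
  obtain ⟨n, b, hb⟩ := exists_basis_orthonormal_of_symm_of_pos hgsymm hgpos
  have hsum₁ := sum_apply_basis_outer_eq_of_isEinsteinWith hb hA₁.2 hE₁
  have hsum₂ := sum_apply_basis_outer_eq_of_isEinsteinWith hb hA₂.2 hE₂
  refine eq_of_forall_modelB_eq hgpos fun s => ?_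
  rw [hρ, ricciForm_eq_sum_modelA hb hR]
  simp only [modelA_sub_modelA_of_isML hA₁.1 hA₂.1, ← Finset.mul_sum, Finset.sum_add_distrib,
    Finset.sum_sub_distrib, hsum₁, hsum₂, modelB, map_add, map_sub, map_smul,
    LinearMap.add_apply, LinearMap.sub_apply, LinearMap.smul_apply, smul_eq_mul,
    hgsymm s.1, hgsymm s.2]
  ring
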